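/- (Uniqueness of the minimal isometric co-extension, Theorem 3.3.) Let H be a complex Hilbert space and N₁, …, N_m pairwise commuting bounded operators on H. For i = 1, 2 let K_i be a complex Hilbert space carrying an m-tuple V^{(i)}_1, …, V^{(i)}_m of doubly commuting isometries: each V^{(i)}_ℓ is an isometry, V^{(i)}_ℓ V^{(i)}_j = V^{(i)}_j V^{(i)}_ℓ for all ℓ, j, and (V^{(i)}_ℓ)* V^{(i)}_j = V^{(i)}_j (V^{(i)}_ℓ)* for ℓ ≠ j. Let X_i : K_i →L[ℂ] H satisfy X_i ∘ (X_i)* = id_H and X_i ∘ V^{(i)}_ℓ = N_ℓ ∘ X_i for all ℓ, and assume minimality: the closed linear span of {(V^{(i)})^α ((X_i)* h) : α ∈ ℕ^m, h ∈ H} equals K_i, where (V^{(i)})^α := ∏_ℓ (V^{(i)}_ℓ)^{α_ℓ}. Then there exists a unitary U : K₁ → K₂ such that U ∘ V^{(1)}_ℓ = V^{(2)}_ℓ ∘ U for every ℓ and X₂ ∘ U = X₁. In particular, the minimal isometric co-extension of a Hilbert module to a vector-valued Hardy module H²(𝔻^m) ⊗ E is unique. -/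

import Mathlib

/-!
For doubly commuting isometries, splitting `α = (α ⊓ β) + (α - β)` and `β = (α ⊓ β) + (β - α)`
and moving the disjointly supported factors across the inner product gives
`⟪V^α X* h, V^β X* g⟫ = ⟪(N^(β - α))* h, (N^(α - β))* g⟫`.
So the Gram matrix of the generators `V^α X* h` depends only on `(H; N)`, and the map
`V₁^α X₁* h ↦ V₂^α X₂* h` extends to a unitary, which intertwines the tuples and the module maps
because it does so on generators.
-/

/-- The joint power `V^α = ∏_ℓ (V ℓ)^(α ℓ)` of a commuting tuple of operators. -/
noncomputable def tuplePow {m : ℕ} {K : Type*} [NormedAddCommGroup K]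
    [InnerProductSpace ℂ K] [CompleteSpace K]
    (V : Fin m → (K →L[ℂ] K)) (hV : ∀ i j : Fin m, Commute (V i) (V j))
    (α : Fin m → ℕ) : K →L[ℂ] K :=
  Finset.univ.noncommProd (fun ℓ => (V ℓ) ^ (α ℓ))
    (fun i _ j _ _ => (hV i j).pow_pow (α i) (α j))

open ContinuousLinearMap Finsupp Set Submodule
open scoped InnerProductSpace ComplexConjugate

section GramMatrix

variable {𝕜 E F ι : Type*} [RCLike 𝕜]
  [NormedAddCommGroup E] [InnerProductSpace 𝕜 E] [NormedAddCommGroup F] [InnerProductSpace 𝕜 F]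

theorem inner_linearCombination_linearCombination (v : ι → E) (a b : ι →₀ 𝕜) :
    ⟪linearCombination 𝕜 v a, linearCombination 𝕜 v b⟫_𝕜 =
      a.sum fun i x => b.sum fun j y => conj x * y * ⟪v i, v j⟫_𝕜 := by
  rw [linearCombination_apply, Finsupp.sum_inner]
  refine Finsupp.sum_congr fun i _ => ?_
  rw [inner_smul_left, linearCombination_apply, Finsupp.inner_sum, Finsupp.mul_sum]
  simp only [inner_smul_right, mul_assoc]

theorem norm_linearCombination_eq_of_inner_eq {v : ι → E} {w : ι → F}
    (h : ∀ i j, ⟪v i, v j⟫_𝕜 = ⟪w i, w j⟫_𝕜) (a : ι →₀ 𝕜) :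
    ‖linearCombination 𝕜 w a‖ = ‖linearCombination 𝕜 v a‖ := by
  simp only [norm_eq_sqrt_re_inner (𝕜 := 𝕜), inner_linearCombination_linearCombination, h]

theorem exists_linearIsometry_of_inner_eq [CompleteSpace F] {v : ι → E} {w : ι → F}
    (h : ∀ i j, ⟪v i, v j⟫_𝕜 = ⟪w i, w j⟫_𝕜) (hv : Dense (span 𝕜 (range v) : Set E)) :
    ∃ U : E →ₗᵢ[𝕜] F, ∀ i, U (v i) = w i := by
  have hdense : DenseRange (linearCombination 𝕜 v) := by
    rwa [DenseRange, ← LinearMap.coe_range, range_linearCombination]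
  have hnorm := norm_linearCombination_eq_of_inner_eq h
  set U := (linearCombination 𝕜 w).extendOfNorm (linearCombination 𝕜 v)
  have hU (a : ι →₀ 𝕜) : U (linearCombination 𝕜 v a) = linearCombination 𝕜 w a :=
    LinearMap.extendOfNorm_eq hdense ⟨1, fun a => by rw [hnorm, one_mul]⟩ a
  refine ⟨⟨U.toLinearMap, fun x => ?_⟩, fun i => by simpa using hU (single i 1)⟩
  refine hdense.induction ?_ (isClosed_eq (by fun_prop) (by fun_prop)) x
  rintro _ ⟨a, rfl⟩
  simp [hU, hnorm]

theorem exists_linearIsometryEquiv_of_inner_eq [CompleteSpace E] [CompleteSpace F]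
    {v : ι → E} {w : ι → F} (h : ∀ i j, ⟪v i, v j⟫_𝕜 = ⟪w i, w j⟫_𝕜)
    (hv : Dense (span 𝕜 (range v) : Set E)) (hw : Dense (span 𝕜 (range w) : Set F)) :
    ∃ U : E ≃ₗᵢ[𝕜] F, ∀ i, U (v i) = w i := by
  obtain ⟨U, hU⟩ := exists_linearIsometry_of_inner_eq h hv
  have hspan : (span 𝕜 (range w) : Set F) ⊆ range U := by
    rw [← LinearIsometry.coe_toLinearMap, ← LinearMap.coe_range, SetLike.coe_subset_coe,
      span_le]
    exact range_subset_iff.2 fun i => ⟨v i, hU i⟩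
  have hsurj : range U = univ := by
    rw [← U.isometry.isClosedEmbedding.isClosed_range.closure_eq, (hw.mono hspan).closure_eq]
  exact ⟨LinearIsometryEquiv.ofSurjective U (range_eq_univ.1 hsurj), hU⟩

end GramMatrix

theorem Commute.star_noncommProd_left {ι M : Type*} [Monoid M] [StarMul M] {s : Finset ι}
    {f : ι → M} (comm) {b : M} (h : ∀ i ∈ s, Commute (star (f i)) b) :
    Commute (star (s.noncommProd f comm)) b := by
  have hb : Commute (star b) (s.noncommProd f comm) :=
    s.noncommProd_commute f comm _ fun i hi => by simpa using (h i hi).star_star.symm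
  simpa using hb.star_star.symm

section TuplePow

variable {m : ℕ} {K : Type*} [NormedAddCommGroup K] [InnerProductSpace ℂ K] [CompleteSpace K]
  {V : Fin m → (K →L[ℂ] K)} (hV : ∀ i j, Commute (V i) (V j))

theorem tuplePow_add (α β : Fin m → ℕ) :
    tuplePow V hV (α + β) = tuplePow V hV α * tuplePow V hV β := by
  simp only [tuplePow, Pi.add_apply, pow_add]
  exact Finset.noncommProd_mul_distrib (fun ℓ => V ℓ ^ α ℓ) (fun ℓ => V ℓ ^ β ℓ) _ _
    fun i _ j _ _ => (hV i j).pow_pow _ _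

theorem tuplePow_single (ℓ : Fin m) : tuplePow V hV (Pi.single ℓ 1) = V ℓ := by
  classical
  unfold tuplePow
  erw [← Finset.mul_noncommProd_erase _ (Finset.mem_univ ℓ),
    Finset.noncommProd_eq_pow_card _ _ _ 1 fun j hj => by
      rw [Pi.single_eq_of_ne (Finset.ne_of_mem_erase hj), pow_zero]]
  simp

theorem tuplePow_single_add_apply (ℓ : Fin m) (α : Fin m → ℕ) (x : K) :
    tuplePow V hV (Pi.single ℓ 1 + α) x = V ℓ (tuplePow V hV α x) := by
  rw [tuplePow_add, tuplePow_single, mul_apply_eq_comp]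

theorem norm_tuplePow_apply (hiso : ∀ ℓ x, ‖V ℓ x‖ = ‖x‖) (α : Fin m → ℕ) (x : K) :
    ‖tuplePow V hV α x‖ = ‖x‖ := by
  let isometries : Submonoid (K →L[ℂ] K) :=
    { carrier := {T | ∀ x, ‖T x‖ = ‖x‖}
      mul_mem' := fun hS hT x => by simp [hS _, hT x]
      one_mem' := fun x => rfl }
  exact isometries.noncommProd_mem _ _ _ (fun ℓ _ => isometries.pow_mem (hiso ℓ) _) x

theorem comp_tuplePow {H : Type*} [NormedAddCommGroup H] [InnerProductSpace ℂ H]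
    [CompleteSpace H] {N : Fin m → (H →L[ℂ] H)} (hN : ∀ i j, Commute (N i) (N j))
    {X : K →L[ℂ] H} (hX : ∀ ℓ, X ∘L V ℓ = N ℓ ∘L X) (α : Fin m → ℕ) :
    X ∘L tuplePow V hV α = tuplePow N hN α ∘L X := by
  let intertwined : Submonoid ((K →L[ℂ] K) × (H →L[ℂ] H)) :=
    { carrier := {p | X ∘L p.1 = p.2 ∘L X}
      mul_mem' := fun {p q} hp hq => by
        change X ∘L (p.1 ∘L q.1) = (p.2 ∘L q.2) ∘L X
        rw [← comp_assoc, hp, comp_assoc, hq, comp_assoc]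
      one_mem' := by simp [one_def] }
  let pairs (ℓ : Fin m) := (V ℓ ^ α ℓ, N ℓ ^ α ℓ)
  have hcomm (i j : Fin m) : Commute (pairs i) (pairs j) :=
    Prod.ext ((hV i j).pow_pow _ _) ((hN i j).pow_pow _ _)
  have hmem := intertwined.noncommProd_mem Finset.univ pairs (fun i _ j _ _ => hcomm i j)
    fun ℓ _ => by
      simpa [pairs] using intertwined.pow_mem (show (V ℓ, N ℓ) ∈ intertwined from hX ℓ) (α ℓ)
  have hfst := Finset.univ.map_noncommProd pairs (fun i _ j _ _ => hcomm i j)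
    (MonoidHom.fst (K →L[ℂ] K) (H →L[ℂ] H))
  have hsnd := Finset.univ.map_noncommProd pairs (fun i _ j _ _ => hcomm i j)
    (MonoidHom.snd (K →L[ℂ] K) (H →L[ℂ] H))
  simp only [MonoidHom.coe_fst, MonoidHom.coe_snd] at hfst hsnd
  change X ∘L (Finset.univ.noncommProd pairs _).1 = (Finset.univ.noncommProd pairs _).2 ∘L X
    at hmem
  rw [hfst, hsnd] at hmem
  exact hmem

theorem commute_star_tuplePow_tuplePow
    (hdc : ∀ i j, i ≠ j → adjoint (V i) ∘L V j = V j ∘L adjoint (V i))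
    {α β : Fin m → ℕ} (hαβ : ∀ ℓ, α ℓ = 0 ∨ β ℓ = 0) :
    Commute (star (tuplePow V hV α)) (tuplePow V hV β) := by
  refine Commute.star_noncommProd_left _ fun i _ => Finset.noncommProd_commute _ _ _ _ fun j _ => ?_
  rw [star_pow]
  by_cases hij : i = j
  · subst hij
    rcases hαβ i with h | h <;> simp [h]
  · exact Commute.pow_pow (hdc i j hij) _ _

theorem inner_tuplePow_apply_tuplePow_apply (hiso : ∀ ℓ x, ‖V ℓ x‖ = ‖x‖)
    (hdc : ∀ i j, i ≠ j → adjoint (V i) ∘L V j = V j ∘L adjoint (V i)) (α β : Fin m → ℕ)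
    (x y : K) :
    ⟪tuplePow V hV α x, tuplePow V hV β y⟫_ℂ =
      ⟪adjoint (tuplePow V hV (β - α)) x, adjoint (tuplePow V hV (α - β)) y⟫_ℂ := by
  have hα : α ⊓ β + (α - β) = α := by
    ext ℓ
    simp only [Pi.add_apply, Pi.inf_apply, Pi.sub_apply]
    omega
  have hβ : α ⊓ β + (β - α) = β := by
    ext ℓ
    simp only [Pi.add_apply, Pi.inf_apply, Pi.sub_apply]
    omega
  have hcomm := commute_star_tuplePow_tuplePow hV hdc (α := α - β) (β := β - α) fun ℓ => by
    simp only [Pi.sub_apply]; omega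
  let common : K →ₗᵢ[ℂ] K := ⟨tuplePow V hV (α ⊓ β), norm_tuplePow_apply hV hiso _⟩
  calc ⟪tuplePow V hV α x, tuplePow V hV β y⟫_ℂ
      = ⟪(tuplePow V hV (α ⊓ β) * tuplePow V hV (α - β)) x,
          (tuplePow V hV (α ⊓ β) * tuplePow V hV (β - α)) y⟫_ℂ := by
        rw [← tuplePow_add, ← tuplePow_add, hα, hβ]
    _ = ⟪common (tuplePow V hV (α - β) x), common (tuplePow V hV (β - α) y)⟫_ℂ := rfl
    _ = ⟪x, (star (tuplePow V hV (α - β)) * tuplePow V hV (β - α)) y⟫_ℂ := by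
        rw [common.inner_map_map, mul_apply_eq_comp, star_eq_adjoint, adjoint_inner_right]
    _ = ⟪adjoint (tuplePow V hV (β - α)) x, adjoint (tuplePow V hV (α - β)) y⟫_ℂ := by
        rw [hcomm.eq, mul_apply_eq_comp, adjoint_inner_left, star_eq_adjoint]

end TuplePow

section Coextension

variable {m : ℕ} {H K : Type*} [NormedAddCommGroup H] [InnerProductSpace ℂ H] [CompleteSpace H]
  [NormedAddCommGroup K] [InnerProductSpace ℂ K] [CompleteSpace K]
  {N : Fin m → (H →L[ℂ] H)} (hN : ∀ i j, Commute (N i) (N j))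
  {V : Fin m → (K →L[ℂ] K)} (hV : ∀ i j, Commute (V i) (V j))
  {X : K →L[ℂ] H}

theorem adjoint_tuplePow_adjoint_apply (hX : ∀ ℓ, X ∘L V ℓ = N ℓ ∘L X) (α : Fin m → ℕ) (h : H) :
    adjoint (tuplePow V hV α) (adjoint X h) = adjoint X (adjoint (tuplePow N hN α) h) := by
  simpa [adjoint_comp] using congr($(congrArg adjoint (comp_tuplePow hV hN hX α)) h)

theorem apply_tuplePow_adjoint_apply (hX : ∀ ℓ, X ∘L V ℓ = N ℓ ∘L X)
    (hXX : X ∘L adjoint X = .id ℂ H) (α : Fin m → ℕ) (h : H) :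
    X (tuplePow V hV α (adjoint X h)) = tuplePow N hN α h := by
  have hXh : X (adjoint X h) = h := congr($hXX h)
  simpa [hXh] using congr($(comp_tuplePow hV hN hX α) (adjoint X h))

theorem inner_tuplePow_adjoint_apply (hX : ∀ ℓ, X ∘L V ℓ = N ℓ ∘L X)
    (hXX : X ∘L adjoint X = .id ℂ H) (hiso : ∀ ℓ x, ‖V ℓ x‖ = ‖x‖)
    (hdc : ∀ i j, i ≠ j → adjoint (V i) ∘L V j = V j ∘L adjoint (V i)) (α β : Fin m → ℕ)
    (h g : H) :
    ⟪tuplePow V hV α (adjoint X h), tuplePow V hV β (adjoint X g)⟫_ℂ =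
      ⟪adjoint (tuplePow N hN (β - α)) h, adjoint (tuplePow N hN (α - β)) g⟫_ℂ := by
  rw [inner_tuplePow_apply_tuplePow_apply hV hiso hdc, adjoint_tuplePow_adjoint_apply hN hV hX,
    adjoint_tuplePow_adjoint_apply hN hV hX, adjoint_inner_left, ← comp_apply, hXX, id_apply]

theorem setOf_tuplePow_adjoint_eq_range :
    {y : K | ∃ (α : Fin m → ℕ) (h : H), y = tuplePow V hV α (adjoint X h)} =
      range fun p : (Fin m → ℕ) × H => tuplePow V hV p.1 (adjoint X p.2) := by
  ext y
  simp [eq_comm]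

end Coextension

/-- Uniqueness of the minimal isometric co-extension (Theorem 3.3): two minimal co-isometric
module maps `X₁, X₂` from spaces carrying doubly commuting tuples of isometries onto the same
commuting tuple `(H; N₁, …, N_m)` are unitarily equivalent via a unitary intertwining the
isometry tuples. -/
theorem minimal_isometric_coextension_unique
    {m : ℕ} {H K₁ K₂ : Type*}
    [NormedAddCommGroup H] [InnerProductSpace ℂ H] [CompleteSpace H]
    [NormedAddCommGroup K₁] [InnerProductSpace ℂ K₁] [CompleteSpace K₁]
    [NormedAddCommGroup K₂] [InnerProductSpace ℂ K₂] [CompleteSpace K₂]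
    (N : Fin m → (H →L[ℂ] H)) (hN : ∀ i j : Fin m, Commute (N i) (N j))
    (V₁ : Fin m → (K₁ →L[ℂ] K₁)) (V₂ : Fin m → (K₂ →L[ℂ] K₂))
    (hV₁iso : ∀ (ℓ : Fin m) (x : K₁), ‖V₁ ℓ x‖ = ‖x‖)
    (hV₂iso : ∀ (ℓ : Fin m) (x : K₂), ‖V₂ ℓ x‖ = ‖x‖)
    (hV₁comm : ∀ i j : Fin m, Commute (V₁ i) (V₁ j))
    (hV₂comm : ∀ i j : Fin m, Commute (V₂ i) (V₂ j))
    (hV₁dc : ∀ i j : Fin m, i ≠ j →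
      (ContinuousLinearMap.adjoint (V₁ i)).comp (V₁ j)
        = (V₁ j).comp (ContinuousLinearMap.adjoint (V₁ i)))
    (hV₂dc : ∀ i j : Fin m, i ≠ j →
      (ContinuousLinearMap.adjoint (V₂ i)).comp (V₂ j)
        = (V₂ j).comp (ContinuousLinearMap.adjoint (V₂ i)))
    (X₁ : K₁ →L[ℂ] H) (X₂ : K₂ →L[ℂ] H)
    (hX₁ : X₁.comp (ContinuousLinearMap.adjoint X₁) = ContinuousLinearMap.id ℂ H)
    (hX₂ : X₂.comp (ContinuousLinearMap.adjoint X₂) = ContinuousLinearMap.id ℂ H)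
    (hmod₁ : ∀ ℓ : Fin m, X₁.comp (V₁ ℓ) = (N ℓ).comp X₁)
    (hmod₂ : ∀ ℓ : Fin m, X₂.comp (V₂ ℓ) = (N ℓ).comp X₂)
    (hmin₁ : Dense (↑(Submodule.span ℂ
      {y : K₁ | ∃ (α : Fin m → ℕ) (h : H),
        y = tuplePow V₁ hV₁comm α ((ContinuousLinearMap.adjoint X₁) h)}) : Set K₁))
    (hmin₂ : Dense (↑(Submodule.span ℂ
      {y : K₂ | ∃ (α : Fin m → ℕ) (h : H),
        y = tuplePow V₂ hV₂comm α ((ContinuousLinearMap.adjoint X₂) h)}) : Set K₂)) :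
    ∃ U : K₁ ≃ₗᵢ[ℂ] K₂,
      (∀ (ℓ : Fin m) (x : K₁), U (V₁ ℓ x) = V₂ ℓ (U x)) ∧
      (∀ x : K₁, X₂ (U x) = X₁ x) := by
  set gen₁ := fun p : (Fin m → ℕ) × H => tuplePow V₁ hV₁comm p.1 (adjoint X₁ p.2)
  set gen₂ := fun p : (Fin m → ℕ) × H => tuplePow V₂ hV₂comm p.1 (adjoint X₂ p.2)
  obtain ⟨U, hU⟩ := exists_linearIsometryEquiv_of_inner_eq (𝕜 := ℂ) (v := gen₁) (w := gen₂)
    (fun p q => by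
      rw [inner_tuplePow_adjoint_apply hN hV₁comm hmod₁ hX₁ hV₁iso hV₁dc,
        inner_tuplePow_adjoint_apply hN hV₂comm hmod₂ hX₂ hV₂iso hV₂dc])
    (by rwa [← setOf_tuplePow_adjoint_eq_range]) (by rwa [← setOf_tuplePow_adjoint_eq_range])
  have hUV (ℓ : Fin m) : (U : K₁ →L[ℂ] K₂) ∘L V₁ ℓ = V₂ ℓ ∘L U := by
    refine ext_on hmin₁ ?_
    rintro _ ⟨α, h, rfl⟩
    change U (V₁ ℓ (gen₁ (α, h))) = V₂ ℓ (U (gen₁ (α, h)))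
    rw [hU, ← tuplePow_single_add_apply, ← tuplePow_single_add_apply]
    exact hU (Pi.single ℓ 1 + α, h)
  have hXU : X₂ ∘L (U : K₁ →L[ℂ] K₂) = X₁ := by
    refine ext_on hmin₁ ?_
    rintro _ ⟨α, h, rfl⟩
    change X₂ (U (gen₁ (α, h))) = X₁ (gen₁ (α, h))
    rw [hU, apply_tuplePow_adjoint_apply hN hV₂comm hmod₂ hX₂,
      apply_tuplePow_adjoint_apply hN hV₁comm hmod₁ hX₁]
  exact ⟨U, fun ℓ x => congr($(hUV ℓ) x), fun x => congr($hXU x)⟩
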